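/- arXiv:1102.1621 — 5 statements merged into one kernel-verified Lean document; each statement's English description precedes it below -/
import Mathlib

section
/- Let A ∈ ℂ^{M×N_a} and B ∈ ℂ^{M×N_b} be matrices with unit ℓ²-norm columns, with coherences μ_a and μ_b respectively and mutual coherence μ_m. Suppose a vector s ∈ ℂ^M satisfies s = A p = B q for vectors p ∈ ℂ^{N_a} and q ∈ ℂ^{N_b}, not both zero. If p is ε_P-concentrated to a set P ⊆ {1,…,N_a} and q is ε_Q-concentrated to a set Q ⊆ {1,…,N_b}, then μ_m² · |P| · |Q| ≥ [(1+μ_a)(1−ε_P) − |P|μ_a]_+ · [(1+μ_b)(1−ε_Q) − |Q|μ_b]_+. -/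
open scoped BigOperators ComplexConjugate
open Matrix

/-- Coherence of a matrix: max over distinct column pairs of |aₖᴴ aₗ| (0 if fewer than 2 columns). -/
noncomputable def coh {m n : Type*} [Fintype m] [Fintype n] (A : Matrix m n ℂ) : ℝ :=
  ⨆ k, ⨆ l, ⨆ _ : k ≠ l, ‖∑ i, conj (A i k) * A i l‖

/-- Mutual coherence between two matrices: max over column pairs of |aₖᴴ bₗ|. -/
noncomputable def mcoh {m na nb : Type*} [Fintype m] [Fintype na] [Fintype nb]
    (A : Matrix m na ℂ) (B : Matrix m nb ℂ) : ℝ :=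
  ⨆ k, ⨆ l, ‖∑ i, conj (A i k) * B i l‖

/-- All columns have unit ℓ²-norm. -/
def unitCols {m n : Type*} [Fintype m] (A : Matrix m n ℂ) : Prop :=
  ∀ k, ∑ i, ‖A i k‖ ^ 2 = 1

/-- Number of nonzero entries of a vector. -/
noncomputable def l0 {n : Type*} (v : n → ℂ) : ℕ := {i | v i ≠ 0}.ncard

/-- ℓ¹ norm of a vector. -/
noncomputable def l1 {n : Type*} [Fintype n] (v : n → ℂ) : ℝ := ∑ i, ‖v i‖

/-- Squared ℓ² norm of a vector. -/
noncomputable def l2sq {n : Type*} [Fintype n] (v : n → ℂ) : ℝ := ∑ i, ‖v i‖ ^ 2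

/-- Submatrix consisting of the columns with index in `E`. -/
def colsub {m n : Type*} (B : Matrix m n ℂ) (E : Finset n) : Matrix m {j // j ∈ E} ℂ :=
  fun i j => B i j.val

/-- Orthogonal projector onto the orthogonal complement of the column span of `B_E`. -/
noncomputable def projC {m n : Type*} [Fintype m] [DecidableEq m] [DecidableEq n]
    (B : Matrix m n ℂ) (E : Finset n) : Matrix m m ℂ :=
  1 - colsub B E * ((colsub B E)ᴴ * colsub B E)⁻¹ * (colsub B E)ᴴ
section aux
variable {m na nb : Type*} [Fintype m] [Fintype na] [Fintype nb]

lemma mcoh_le (A : Matrix m na ℂ) (B : Matrix m nb ℂ) (k : na) (l : nb) :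
    ‖∑ i, conj (A i k) * B i l‖ ≤ mcoh A B := by
  have h1 : ‖∑ i, conj (A i k) * B i l‖ ≤ ⨆ l', ‖∑ i, conj (A i k) * B i l'‖ :=
    le_ciSup (f := fun l' => ‖∑ i, conj (A i k) * B i l'‖)
      (Set.Finite.bddAbove (Set.finite_range _)) l
  exact h1.trans (le_ciSup (f := fun k' => ⨆ l', ‖∑ i, conj (A i k') * B i l'‖)
      (Set.Finite.bddAbove (Set.finite_range _)) k)

lemma coh_le (A : Matrix m na ℂ) {k l : na} (hne : k ≠ l) :
    ‖∑ i, conj (A i k) * A i l‖ ≤ coh A := by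
  have h0 : ‖∑ i, conj (A i k) * A i l‖
      = ⨆ _ : k ≠ l, ‖∑ i, conj (A i k) * A i l‖ :=
    (ciSup_pos (f := fun _ : k ≠ l => ‖∑ i, conj (A i k) * A i l‖) hne).symm
  rw [h0]
  have h1 : (⨆ _ : k ≠ l, ‖∑ i, conj (A i k) * A i l‖)
      ≤ ⨆ l', ⨆ _ : k ≠ l', ‖∑ i, conj (A i k) * A i l'‖ :=
    le_ciSup (f := fun l' => ⨆ _ : k ≠ l', ‖∑ i, conj (A i k) * A i l'‖)
      (Set.Finite.bddAbove (Set.finite_range _)) l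
  exact h1.trans (le_ciSup (f := fun k' => ⨆ l', ⨆ _ : k' ≠ l', ‖∑ i, conj (A i k') * A i l'‖)
      (Set.Finite.bddAbove (Set.finite_range _)) k)

lemma coh_nonneg (A : Matrix m na ℂ) : 0 ≤ coh A := by
  rcases isEmpty_or_nonempty na with h | h
  · unfold coh; rw [Real.iSup_of_isEmpty]
  · obtain ⟨k⟩ := h
    by_cases hex : ∃ l, k ≠ l
    · obtain ⟨l, hl⟩ := hex
      exact (norm_nonneg _).trans (coh_le A hl)
    · push_neg at hex
      unfold coh
      have hin : ∀ k' l' : na, (⨆ _ : k' ≠ l', ‖∑ i, conj (A i k') * A i l'‖) = 0 := by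
        intro k' l'
        have : ¬ (k' ≠ l') := by
          have hk : k = k' := hex k'
          have hl : k = l' := hex l'
          simp [← hk, ← hl]
        haveI : IsEmpty (k' ≠ l') := ⟨fun h => this h⟩
        rw [Real.iSup_of_isEmpty]
      simp only [hin]
      simp

lemma mcoh_nonneg (A : Matrix m na ℂ) (B : Matrix m nb ℂ) : 0 ≤ mcoh A B := by
  rcases isEmpty_or_nonempty na with h | h
  · unfold mcoh; rw [Real.iSup_of_isEmpty]
  · rcases isEmpty_or_nonempty nb with h2 | h2
    · unfold mcoh
      have : ∀ k : na, (⨆ l : nb, ‖∑ i, conj (A i k) * B i l‖) = 0 := fun k =>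
        Real.iSup_of_isEmpty _
      simp only [this]
      simp
    · obtain ⟨k⟩ := h; obtain ⟨l⟩ := h2
      exact (norm_nonneg _).trans (mcoh_le A B k l)

lemma mcoh_comm (A : Matrix m na ℂ) (B : Matrix m nb ℂ) : mcoh B A = mcoh A B := by
  have key : ∀ (k : nb) (l : na), ‖∑ i, conj (B i k) * A i l‖ = ‖∑ i, conj (A i l) * B i k‖ := by
    intro k l
    have : (∑ i, conj (B i k) * A i l) = conj (∑ i, conj (A i l) * B i k) := by
      rw [map_sum]
      refine Finset.sum_congr rfl fun i _ => ?_
      simp [mul_comm]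
    rw [this, RCLike.norm_conj]
  refine le_antisymm ?_ ?_
  · refine Real.iSup_le (fun k => Real.iSup_le (fun l => ?_) (mcoh_nonneg A B))
      (mcoh_nonneg A B)
    rw [key]; exact mcoh_le A B l k
  · refine Real.iSup_le (fun k => Real.iSup_le (fun l => ?_) (mcoh_nonneg B A))
      (mcoh_nonneg B A)
    rw [← key]; exact mcoh_le B A l k

end aux

lemma key_ineq {M N1 N2 : ℕ} (A : Matrix (Fin M) (Fin N1) ℂ) (B : Matrix (Fin M) (Fin N2) ℂ)
    (hA : unitCols A) (p : Fin N1 → ℂ) (q : Fin N2 → ℂ)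
    (hs : A.mulVec p = B.mulVec q)
    (P : Finset (Fin N1)) (ε : ℝ) (hcon : (1 - ε) * l1 p ≤ ∑ i ∈ P, ‖p i‖) :
    ((1 + coh A) * (1 - ε) - P.card * coh A) * l1 p ≤ P.card * (mcoh A B * l1 q) := by
  have hμa0 : 0 ≤ coh A := coh_nonneg A
  set g : Fin N1 → ℂ := fun k => ∑ i, conj (A i k) * (A.mulVec p) i with hg
  have hupper : ∀ k, ‖g k‖ ≤ mcoh A B * l1 q := by
    intro k
    have hgk : g k = ∑ l, (∑ i, conj (A i k) * B i l) * q l := by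
      have h0 : g k = ∑ i, conj (A i k) * (B.mulVec q) i := by
        simp only [hg, hs]
      rw [h0]
      simp only [Matrix.mulVec, dotProduct, Finset.mul_sum, Finset.sum_mul]
      rw [Finset.sum_comm]
      refine Finset.sum_congr rfl fun l _ => Finset.sum_congr rfl fun i _ => ?_
      ring
    rw [hgk]
    calc ‖∑ l, (∑ i, conj (A i k) * B i l) * q l‖
        ≤ ∑ l, ‖(∑ i, conj (A i k) * B i l) * q l‖ := norm_sum_le _ _
      _ = ∑ l, ‖∑ i, conj (A i k) * B i l‖ * ‖q l‖ := by simp [norm_mul]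
      _ ≤ ∑ l, mcoh A B * ‖q l‖ := Finset.sum_le_sum fun l _ =>
          mul_le_mul_of_nonneg_right (mcoh_le A B k l) (norm_nonneg _)
      _ = mcoh A B * l1 q := by rw [l1, Finset.mul_sum]
  have hlower : ∀ k, (1 + coh A) * ‖p k‖ - coh A * l1 p ≤ ‖g k‖ := by
    intro k
    have hgk : g k = ∑ l, (∑ i, conj (A i k) * A i l) * p l := by
      simp only [hg, Matrix.mulVec, dotProduct, Finset.mul_sum, Finset.sum_mul]
      rw [Finset.sum_comm]
      refine Finset.sum_congr rfl fun l _ => Finset.sum_congr rfl fun i _ => ?_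
      ring
    have hdiag : (∑ i, conj (A i k) * A i k) = 1 := by
      have h1 : (∑ i, conj (A i k) * A i k) = ((∑ i, ‖A i k‖ ^ 2 : ℝ) : ℂ) := by
        push_cast
        exact Finset.sum_congr rfl fun i _ => by exact_mod_cast RCLike.conj_mul (A i k)
      rw [h1, hA k]; norm_num
    have hsplit : g k = (∑ l ∈ Finset.univ.erase k, (∑ i, conj (A i k) * A i l) * p l) + p k := by
      rw [hgk, ← Finset.sum_erase_add _ _ (Finset.mem_univ k), hdiag, one_mul]
    have hrest : ‖∑ l ∈ Finset.univ.erase k, (∑ i, conj (A i k) * A i l) * p l‖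
        ≤ coh A * (l1 p - ‖p k‖) := by
      calc ‖∑ l ∈ Finset.univ.erase k, (∑ i, conj (A i k) * A i l) * p l‖
          ≤ ∑ l ∈ Finset.univ.erase k, ‖(∑ i, conj (A i k) * A i l) * p l‖ := norm_sum_le _ _
        _ = ∑ l ∈ Finset.univ.erase k, ‖∑ i, conj (A i k) * A i l‖ * ‖p l‖ := by simp [norm_mul]
        _ ≤ ∑ l ∈ Finset.univ.erase k, coh A * ‖p l‖ := Finset.sum_le_sum fun l hl =>
            mul_le_mul_of_nonneg_right (coh_le A (Finset.ne_of_mem_erase hl).symm)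
              (norm_nonneg _)
        _ = coh A * (l1 p - ‖p k‖) := by
            rw [← Finset.mul_sum]
            congr 1
            have := Finset.sum_erase_add Finset.univ (fun l => ‖p l‖) (Finset.mem_univ k)
            rw [l1]; linarith
    have hpk : ‖p k‖ ≤ ‖g k‖ + ‖∑ l ∈ Finset.univ.erase k, (∑ i, conj (A i k) * A i l) * p l‖ := by
      calc ‖p k‖ = ‖g k - ∑ l ∈ Finset.univ.erase k, (∑ i, conj (A i k) * A i l) * p l‖ := by
            rw [hsplit]; congr 1; ring
        _ ≤ ‖g k‖ + ‖∑ l ∈ Finset.univ.erase k, (∑ i, conj (A i k) * A i l) * p l‖ :=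
            norm_sub_le _ _
    nlinarith [norm_nonneg (g k)]
  -- sum over P
  have h1 : (1 + coh A) * ((1 - ε) * l1 p) - P.card * (coh A * l1 p)
      ≤ ∑ k ∈ P, ‖g k‖ := by
    calc (1 + coh A) * ((1 - ε) * l1 p) - P.card * (coh A * l1 p)
        ≤ (1 + coh A) * (∑ i ∈ P, ‖p i‖) - P.card * (coh A * l1 p) := by
          have h1pa : (0:ℝ) ≤ 1 + coh A := by linarith
          nlinarith [mul_le_mul_of_nonneg_left hcon h1pa]
      _ = ∑ k ∈ P, ((1 + coh A) * ‖p k‖ - coh A * l1 p) := by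
          rw [Finset.sum_sub_distrib, ← Finset.mul_sum, Finset.sum_const]
          ring_nf
      _ ≤ ∑ k ∈ P, ‖g k‖ := Finset.sum_le_sum fun k _ => hlower k
  have h2 : ∑ k ∈ P, ‖g k‖ ≤ P.card * (mcoh A B * l1 q) := by
    calc ∑ k ∈ P, ‖g k‖ ≤ ∑ _k ∈ P, mcoh A B * l1 q := Finset.sum_le_sum fun k _ => hupper k
      _ = P.card * (mcoh A B * l1 q) := by rw [Finset.sum_const, nsmul_eq_mul]
  calc ((1 + coh A) * (1 - ε) - P.card * coh A) * l1 p
      = (1 + coh A) * ((1 - ε) * l1 p) - P.card * (coh A * l1 p) := by ring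
    _ ≤ ∑ k ∈ P, ‖g k‖ := h1
    _ ≤ P.card * (mcoh A B * l1 q) := h2

/-- Uncertainty relation for ε-concentrated vectors (Theorem 1). -/
theorem uncertainty_relation_eps_concentrated
    {M Na Nb : ℕ} (A : Matrix (Fin M) (Fin Na) ℂ) (B : Matrix (Fin M) (Fin Nb) ℂ)
    (hA : unitCols A) (hB : unitCols B)
    (μa μb μm : ℝ) (hμa : μa = coh A) (hμb : μb = coh B) (hμm : μm = mcoh A B)
    (p : Fin Na → ℂ) (q : Fin Nb → ℂ) (hpq : ¬(p = 0 ∧ q = 0))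
    (s : Fin M → ℂ) (hs₁ : s = A.mulVec p) (hs₂ : s = B.mulVec q)
    (P : Finset (Fin Na)) (Q : Finset (Fin Nb)) (εP εQ : ℝ)
    (hεP : εP ∈ Set.Icc (0:ℝ) 1) (hεQ : εQ ∈ Set.Icc (0:ℝ) 1)
    (hconP : (1 - εP) * l1 p ≤ ∑ i ∈ P, ‖p i‖)
    (hconQ : (1 - εQ) * l1 q ≤ ∑ i ∈ Q, ‖q i‖) :
    max ((1 + μa) * (1 - εP) - P.card * μa) 0 *
      max ((1 + μb) * (1 - εQ) - Q.card * μb) 0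
      ≤ μm ^ 2 * P.card * Q.card := by
  have hsAB : A.mulVec p = B.mulVec q := hs₁ ▸ hs₂
  have hKA : ((1 + coh A) * (1 - εP) - P.card * coh A) * l1 p
      ≤ P.card * (mcoh A B * l1 q) := key_ineq A B hA p q hsAB P εP hconP
  have hKB : ((1 + coh B) * (1 - εQ) - Q.card * coh B) * l1 q
      ≤ Q.card * (mcoh A B * l1 p) := by
    have := key_ineq B A hB q p hsAB.symm Q εQ hconQ
    rwa [mcoh_comm A B] at this
  rw [hμa, hμb, hμm]
  set X := (1 + coh A) * (1 - εP) - P.card * coh A with hX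
  set Y := (1 + coh B) * (1 - εQ) - Q.card * coh B with hY
  have hRHS : (0:ℝ) ≤ mcoh A B ^ 2 * P.card * Q.card := by positivity
  by_cases hXpos : 0 < X
  · by_cases hYpos : 0 < Y
    · -- both positive: show p ≠ 0 and q ≠ 0
      have hl1p_nonneg : (0:ℝ) ≤ l1 p := Finset.sum_nonneg fun i _ => norm_nonneg _
      have hl1q_nonneg : (0:ℝ) ≤ l1 q := Finset.sum_nonneg fun i _ => norm_nonneg _
      have hl1_pos_of_ne : ∀ {n : ℕ} (v : Fin n → ℂ), v ≠ 0 → 0 < l1 v := by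
        intro n v hv
        obtain ⟨i, hi⟩ : ∃ i, v i ≠ 0 := by
          by_contra h
          push_neg at h
          exact hv (funext fun i => h i)
        have : 0 < ‖v i‖ := norm_pos_iff.mpr hi
        have hle : ‖v i‖ ≤ l1 v :=
          Finset.single_le_sum (fun j _ => norm_nonneg (v j)) (Finset.mem_univ i)
        linarith
      have hp0 : p ≠ 0 := by
        intro hp
        have hq0 : q ≠ 0 := fun hq => hpq ⟨hp, hq⟩
        have hl1p : l1 p = 0 := by simp [l1, hp]
        have hq : 0 < l1 q := hl1_pos_of_ne q hq0
        rw [hl1p] at hKB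
        simp only [mul_zero] at hKB
        nlinarith
      have hq0 : q ≠ 0 := by
        intro hq
        have hl1q : l1 q = 0 := by simp [l1, hq]
        have hp : 0 < l1 p := hl1_pos_of_ne p hp0
        rw [hl1q] at hKA
        simp only [mul_zero] at hKA
        nlinarith
      have hlp : 0 < l1 p := hl1_pos_of_ne p hp0
      have hlq : 0 < l1 q := hl1_pos_of_ne q hq0
      rw [max_eq_left hXpos.le, max_eq_left hYpos.le]
      have h1 : X * l1 p ≤ P.card * (mcoh A B * l1 q) := hKA
      have h2 : Y * l1 q ≤ Q.card * (mcoh A B * l1 p) := hKB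
      have hprod : (X * l1 p) * (Y * l1 q)
          ≤ (P.card * (mcoh A B * l1 q)) * (Q.card * (mcoh A B * l1 p)) :=
        mul_le_mul h1 h2 (by positivity) (le_trans (by positivity) h1)
      have hpq_pos : 0 < l1 p * l1 q := mul_pos hlp hlq
      nlinarith [hprod, hpq_pos]
    · push_neg at hYpos
      rw [max_eq_right hYpos, mul_zero]
      exact hRHS
  · push_neg at hXpos
    rw [max_eq_right hXpos, zero_mul]
    exact hRHS
end

section
/- Let A ∈ ℂ^{M×N_a} and B ∈ ℂ^{M×N_b} be matrices with unit ℓ²-norm columns, with A having coherence μ_a and with mutual coherence μ_m between A and B. Suppose A p = B q for vectors p ∈ ℂ^{N_a} and q ∈ ℂ^{N_b}, and that p is ε_P-concentrated to a set P ⊆ {1,…,N_a}. Then [(1+μ_a)(1−ε_P) − |P|μ_a]_+ · ‖p‖₁ ≤ |P| · μ_m · ‖q‖₁. -/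
open scoped BigOperators ComplexConjugate
open Matrix

/-- One-sided inequality for an ε_P-concentrated vector p with A p = B q. -/
theorem eps_concentrated_one_sided_p
    {M Na Nb : ℕ} (A : Matrix (Fin M) (Fin Na) ℂ) (B : Matrix (Fin M) (Fin Nb) ℂ)
    (hA : unitCols A) (hB : unitCols B)
    (μa μm : ℝ) (hμa : μa = coh A) (hμm : μm = mcoh A B)
    (p : Fin Na → ℂ) (q : Fin Nb → ℂ)
    (heq : A.mulVec p = B.mulVec q)
    (P : Finset (Fin Na)) (εP : ℝ) (hεP : εP ∈ Set.Icc (0:ℝ) 1)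
    (hconP : (1 - εP) * l1 p ≤ ∑ i ∈ P, ‖p i‖) :
    max ((1 + μa) * (1 - εP) - P.card * μa) 0 * l1 p ≤ P.card * μm * l1 q := by
  -- nonnegativity
  have hμa0 : 0 ≤ μa := by
    rw [hμa, coh]
    exact Real.iSup_nonneg fun k => Real.iSup_nonneg fun l => Real.iSup_nonneg fun _ =>
      norm_nonneg _
  have hμm0 : 0 ≤ μm := by
    rw [hμm, mcoh]
    exact Real.iSup_nonneg fun k => Real.iSup_nonneg fun l => norm_nonneg _
  have hl1q : 0 ≤ l1 q := Finset.sum_nonneg fun i _ => norm_nonneg _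
  have hl1p : 0 ≤ l1 p := Finset.sum_nonneg fun i _ => norm_nonneg _
  -- bounds from sup
  have hμa_ge : ∀ k l : Fin Na, k ≠ l → ‖∑ i, conj (A i k) * A i l‖ ≤ μa := by
    intro k l hkl
    rw [hμa, coh]
    calc ‖∑ i, conj (A i k) * A i l‖
        = ⨆ _ : k ≠ l, ‖∑ i, conj (A i k) * A i l‖ := (ciSup_pos (f := fun _ => ‖∑ i, conj (A i k) * A i l‖) hkl).symm
      _ ≤ ⨆ l, ⨆ _ : k ≠ l, ‖∑ i, conj (A i k) * A i l‖ :=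
          le_ciSup (f := fun l => ⨆ _ : k ≠ l, ‖∑ i, conj (A i k) * A i l‖)
            (Set.finite_range _).bddAbove l
      _ ≤ _ := le_ciSup (f := fun k => ⨆ l, ⨆ _ : k ≠ l, ‖∑ i, conj (A i k) * A i l‖)
          (Set.finite_range _).bddAbove k
  have hμm_ge : ∀ (k : Fin Na) (l : Fin Nb), ‖∑ i, conj (A i k) * B i l‖ ≤ μm := by
    intro k l
    rw [hμm, mcoh]
    calc ‖∑ i, conj (A i k) * B i l‖
        ≤ ⨆ l, ‖∑ i, conj (A i k) * B i l‖ :=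
          le_ciSup (f := fun l => ‖∑ i, conj (A i k) * B i l‖)
            (Set.finite_range _).bddAbove l
      _ ≤ _ := le_ciSup (f := fun k => ⨆ l, ‖∑ i, conj (A i k) * B i l‖)
          (Set.finite_range _).bddAbove k
  -- key pointwise inequality
  have key : ∀ k : Fin Na, (1 + μa) * ‖p k‖ ≤ μm * l1 q + μa * l1 p := by
    intro k
    have hgk : (∑ i, conj (A i k) * A i k) = 1 := by
      have h := hA k
      calc (∑ i, conj (A i k) * A i k) = ∑ i, ((‖A i k‖ ^ 2 : ℝ) : ℂ) := by
            refine Finset.sum_congr rfl fun i _ => ?_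
            rw [Complex.conj_mul']; push_cast; ring
        _ = ((∑ i, ‖A i k‖ ^ 2 : ℝ) : ℂ) := by push_cast; ring
        _ = 1 := by rw [h]; norm_num
    have hswapA : ∑ i, conj (A i k) * A.mulVec p i
        = ∑ l, (∑ i, conj (A i k) * A i l) * p l := by
      simp only [mulVec, dotProduct, Finset.mul_sum, Finset.sum_mul]
      rw [Finset.sum_comm]
      exact Finset.sum_congr rfl fun l _ => Finset.sum_congr rfl fun i _ => by ring
    have hswapB : ∑ i, conj (A i k) * B.mulVec q i
        = ∑ l, (∑ i, conj (A i k) * B i l) * q l := by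
      simp only [mulVec, dotProduct, Finset.mul_sum, Finset.sum_mul]
      rw [Finset.sum_comm]
      exact Finset.sum_congr rfl fun l _ => Finset.sum_congr rfl fun i _ => by ring
    have hsplit : ∑ l, (∑ i, conj (A i k) * A i l) * p l
        = (∑ l ∈ Finset.univ.erase k, (∑ i, conj (A i k) * A i l) * p l) + p k := by
      rw [← Finset.sum_erase_add Finset.univ _ (Finset.mem_univ k), hgk, one_mul]
    have h2 : (∑ l ∈ Finset.univ.erase k, (∑ i, conj (A i k) * A i l) * p l) + p k
        = ∑ l, (∑ i, conj (A i k) * B i l) * q l := by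
      rw [← hsplit, ← hswapA, ← hswapB]
      exact Finset.sum_congr rfl fun i _ => by rw [heq]
    have hpk : p k = (∑ l, (∑ i, conj (A i k) * B i l) * q l)
        - ∑ l ∈ Finset.univ.erase k, (∑ i, conj (A i k) * A i l) * p l := by
      linear_combination h2
    have herase : (∑ l ∈ Finset.univ.erase k, ‖p l‖) = l1 p - ‖p k‖ := by
      rw [l1, ← Finset.sum_erase_add Finset.univ _ (Finset.mem_univ k)]
      ring
    have hb : ‖∑ l, (∑ i, conj (A i k) * B i l) * q l‖ ≤ μm * l1 q := by
      calc ‖∑ l, (∑ i, conj (A i k) * B i l) * q l‖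
          ≤ ∑ l, ‖(∑ i, conj (A i k) * B i l) * q l‖ := norm_sum_le _ _
        _ ≤ ∑ l, μm * ‖q l‖ := Finset.sum_le_sum fun l _ => by
            rw [norm_mul]
            exact mul_le_mul_of_nonneg_right (hμm_ge k l) (norm_nonneg _)
        _ = μm * l1 q := by rw [l1, Finset.mul_sum]
    have ha : ‖∑ l ∈ Finset.univ.erase k, (∑ i, conj (A i k) * A i l) * p l‖
        ≤ μa * (l1 p - ‖p k‖) := by
      calc ‖∑ l ∈ Finset.univ.erase k, (∑ i, conj (A i k) * A i l) * p l‖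
          ≤ ∑ l ∈ Finset.univ.erase k, ‖(∑ i, conj (A i k) * A i l) * p l‖ :=
            norm_sum_le _ _
        _ ≤ ∑ l ∈ Finset.univ.erase k, μa * ‖p l‖ := Finset.sum_le_sum fun l hl => by
            rw [norm_mul]
            exact mul_le_mul_of_nonneg_right
              (hμa_ge k l (Finset.ne_of_mem_erase hl).symm) (norm_nonneg _)
        _ = μa * (l1 p - ‖p k‖) := by rw [← herase, Finset.mul_sum]
    have h1 : ‖p k‖ ≤ μm * l1 q + μa * (l1 p - ‖p k‖) := by
      calc ‖p k‖ = ‖(∑ l, (∑ i, conj (A i k) * B i l) * q l)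
            - ∑ l ∈ Finset.univ.erase k, (∑ i, conj (A i k) * A i l) * p l‖ := by
            rw [← hpk]
        _ ≤ ‖∑ l, (∑ i, conj (A i k) * B i l) * q l‖
            + ‖∑ l ∈ Finset.univ.erase k, (∑ i, conj (A i k) * A i l) * p l‖ :=
            norm_sub_le _ _
        _ ≤ μm * l1 q + μa * (l1 p - ‖p k‖) := add_le_add hb ha
    linarith
  -- sum over P
  have hsum : (1 + μa) * ∑ i ∈ P, ‖p i‖ ≤ P.card * (μm * l1 q + μa * l1 p) := by
    rw [Finset.mul_sum]
    calc ∑ i ∈ P, (1 + μa) * ‖p i‖ ≤ ∑ i ∈ P, (μm * l1 q + μa * l1 p) :=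
          Finset.sum_le_sum fun i _ => key i
      _ = P.card * (μm * l1 q + μa * l1 p) := by
          rw [Finset.sum_const, nsmul_eq_mul]
  have main : (1 + μa) * ((1 - εP) * l1 p) ≤ P.card * μm * l1 q + P.card * μa * l1 p := by
    have := mul_le_mul_of_nonneg_left hconP (by linarith : (0:ℝ) ≤ 1 + μa)
    nlinarith
  rcases le_total ((1 + μa) * (1 - εP) - P.card * μa) 0 with h | h
  · rw [max_eq_right h, zero_mul]
    positivity
  · rw [max_eq_left h]
    nlinarith
end

section
/- Let A ∈ ℂ^{M×N_a} and B ∈ ℂ^{M×N_b} be matrices with unit ℓ²-norm columns, with B having coherence μ_b and with mutual coherence μ_m between A and B. Suppose A p = B q for vectors p ∈ ℂ^{N_a} and q ∈ ℂ^{N_b}, and that q is ε_Q-concentrated to a set Q ⊆ {1,…,N_b}. Then [(1+μ_b)(1−ε_Q) − |Q|μ_b]_+ · ‖q‖₁ ≤ |Q| · μ_m · ‖p‖₁. -/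
open scoped BigOperators ComplexConjugate
open Matrix

/-- One-sided inequality for an ε_Q-concentrated vector q with A p = B q. -/
theorem eps_concentrated_one_sided_q
    {M Na Nb : ℕ} (A : Matrix (Fin M) (Fin Na) ℂ) (B : Matrix (Fin M) (Fin Nb) ℂ)
    (hA : unitCols A) (hB : unitCols B)
    (μb μm : ℝ) (hμb : μb = coh B) (hμm : μm = mcoh A B)
    (p : Fin Na → ℂ) (q : Fin Nb → ℂ)
    (heq : A.mulVec p = B.mulVec q)
    (Q : Finset (Fin Nb)) (εQ : ℝ) (hεQ : εQ ∈ Set.Icc (0:ℝ) 1)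
    (hconQ : (1 - εQ) * l1 q ≤ ∑ i ∈ Q, ‖q i‖) :
    max ((1 + μb) * (1 - εQ) - Q.card * μb) 0 * l1 q ≤ Q.card * μm * l1 p := by

  have hl1p : 0 ≤ l1 p := Finset.sum_nonneg fun i _ => norm_nonneg _
  have hl1q : 0 ≤ l1 q := Finset.sum_nonneg fun i _ => norm_nonneg _
  have hμm0 : 0 ≤ μm := by
    rw [hμm, mcoh]
    exact Real.iSup_nonneg fun k => Real.iSup_nonneg fun l => norm_nonneg _
  have hμb0 : 0 ≤ μb := by
    rw [hμb, coh]
    exact Real.iSup_nonneg fun k => Real.iSup_nonneg fun l =>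
      Real.iSup_nonneg fun _ => norm_nonneg _
  have hmc : ∀ k l, ‖∑ i, conj (A i k) * B i l‖ ≤ μm := by
    intro k l
    rw [hμm, mcoh]
    calc ‖∑ i, conj (A i k) * B i l‖
        ≤ ⨆ l, ‖∑ i, conj (A i k) * B i l‖ :=
          le_ciSup (f := fun l => ‖∑ i, conj (A i k) * B i l‖)
            (Set.Finite.bddAbove (Set.finite_range _)) l
      _ ≤ ⨆ k, ⨆ l, ‖∑ i, conj (A i k) * B i l‖ :=
          le_ciSup (f := fun k => ⨆ l, ‖∑ i, conj (A i k) * B i l‖)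
            (Set.Finite.bddAbove (Set.finite_range _)) k
  have hcB : ∀ k l, k ≠ l → ‖∑ i, conj (B i k) * B i l‖ ≤ μb := by
    intro k l hkl
    rw [hμb, coh]
    calc ‖∑ i, conj (B i k) * B i l‖
        = ⨆ _ : k ≠ l, ‖∑ i, conj (B i k) * B i l‖ := (ciSup_pos (f := fun _ => ‖∑ i, conj (B i k) * B i l‖) hkl).symm
      _ ≤ ⨆ l, ⨆ _ : k ≠ l, ‖∑ i, conj (B i k) * B i l‖ :=
          le_ciSup (f := fun l => ⨆ _ : k ≠ l, ‖∑ i, conj (B i k) * B i l‖)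
            (Set.Finite.bddAbove (Set.finite_range _)) l
      _ ≤ ⨆ k, ⨆ l, ⨆ _ : k ≠ l, ‖∑ i, conj (B i k) * B i l‖ :=
          le_ciSup (f := fun k => ⨆ l, ⨆ _ : k ≠ l, ‖∑ i, conj (B i k) * B i l‖)
            (Set.Finite.bddAbove (Set.finite_range _)) k
  have hd : ∀ j, (∑ i, conj (B i j) * B i j) = 1 := by
    intro j
    have h1 := hB j
    calc (∑ i, conj (B i j) * B i j) = ∑ i, ((‖B i j‖ ^ 2 : ℝ) : ℂ) := by
          refine Finset.sum_congr rfl fun i _ => ?_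
          rw [Complex.conj_mul', Complex.ofReal_pow]
      _ = ((∑ i, ‖B i j‖ ^ 2 : ℝ) : ℂ) := by push_cast; ring
      _ = 1 := by rw [h1]; norm_num
  have step : ∀ j ∈ Q, (1 + μb) * ‖q j‖ ≤ μm * l1 p + μb * l1 q := by
    intro j _
    have expandB : (∑ i, conj (B i j) * (B.mulVec q) i)
        = ∑ l, (∑ i, conj (B i j) * B i l) * q l := by
      calc (∑ i, conj (B i j) * (B.mulVec q) i)
          = ∑ i, ∑ l, conj (B i j) * (B i l * q l) := by
            simp [Matrix.mulVec, dotProduct, Finset.mul_sum]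
        _ = ∑ l, ∑ i, conj (B i j) * (B i l * q l) := Finset.sum_comm
        _ = ∑ l, (∑ i, conj (B i j) * B i l) * q l := by
            refine Finset.sum_congr rfl fun l _ => ?_
            rw [Finset.sum_mul]
            exact Finset.sum_congr rfl fun i _ => by ring
    have hqj : q j = (∑ i, conj (B i j) * (A.mulVec p) i)
        - ∑ l ∈ Finset.univ.erase j, (∑ i, conj (B i j) * B i l) * q l := by
      rw [heq, expandB, ← Finset.add_sum_erase _ _ (Finset.mem_univ j), hd j]
      ring
    have hfirst : ‖∑ i, conj (B i j) * (A.mulVec p) i‖ ≤ μm * l1 p := by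
      have expandA : (∑ i, conj (B i j) * (A.mulVec p) i)
          = ∑ k, (∑ i, conj (B i j) * A i k) * p k := by
        calc (∑ i, conj (B i j) * (A.mulVec p) i)
            = ∑ i, ∑ k, conj (B i j) * (A i k * p k) := by
              simp [Matrix.mulVec, dotProduct, Finset.mul_sum]
          _ = ∑ k, ∑ i, conj (B i j) * (A i k * p k) := Finset.sum_comm
          _ = ∑ k, (∑ i, conj (B i j) * A i k) * p k := by
              refine Finset.sum_congr rfl fun k _ => ?_
              rw [Finset.sum_mul]
              exact Finset.sum_congr rfl fun i _ => by ring
      rw [expandA]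
      calc ‖∑ k, (∑ i, conj (B i j) * A i k) * p k‖
          ≤ ∑ k, ‖(∑ i, conj (B i j) * A i k) * p k‖ := norm_sum_le _ _
        _ ≤ ∑ k, μm * ‖p k‖ := by
            refine Finset.sum_le_sum fun k _ => ?_
            rw [norm_mul]
            refine mul_le_mul_of_nonneg_right ?_ (norm_nonneg _)
            have hconjeq : (∑ i, conj (B i j) * A i k)
                = conj (∑ i, conj (A i k) * B i j) := by
              rw [map_sum]
              exact Finset.sum_congr rfl fun i _ => by
                simp [mul_comm]
            rw [hconjeq, RCLike.norm_conj]
            exact hmc k j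
        _ = μm * l1 p := by rw [l1, Finset.mul_sum]
    have hsecond : ‖∑ l ∈ Finset.univ.erase j, (∑ i, conj (B i j) * B i l) * q l‖
        ≤ μb * (l1 q - ‖q j‖) := by
      calc ‖∑ l ∈ Finset.univ.erase j, (∑ i, conj (B i j) * B i l) * q l‖
          ≤ ∑ l ∈ Finset.univ.erase j, ‖(∑ i, conj (B i j) * B i l) * q l‖ :=
            norm_sum_le _ _
        _ ≤ ∑ l ∈ Finset.univ.erase j, μb * ‖q l‖ := by
            refine Finset.sum_le_sum fun l hl => ?_
            rw [norm_mul]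
            exact mul_le_mul_of_nonneg_right
              (hcB j l (Finset.ne_of_mem_erase hl).symm) (norm_nonneg _)
        _ = μb * (l1 q - ‖q j‖) := by
            rw [← Finset.mul_sum, l1,
              ← Finset.add_sum_erase _ (fun l => ‖q l‖) (Finset.mem_univ j)]
            ring
    have := (hqj ▸ (norm_sub_le _ _ : ‖(∑ i, conj (B i j) * (A.mulVec p) i)
        - ∑ l ∈ Finset.univ.erase j, (∑ i, conj (B i j) * B i l) * q l‖ ≤ _))
    have hnorm : ‖q j‖ ≤ μm * l1 p + μb * (l1 q - ‖q j‖) := by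
      calc ‖q j‖ ≤ ‖∑ i, conj (B i j) * (A.mulVec p) i‖
            + ‖∑ l ∈ Finset.univ.erase j, (∑ i, conj (B i j) * B i l) * q l‖ := by
            rw [hqj]; exact norm_sub_le _ _
        _ ≤ μm * l1 p + μb * (l1 q - ‖q j‖) := add_le_add hfirst hsecond
    nlinarith [hnorm]
  have hsum : (1 + μb) * ∑ j ∈ Q, ‖q j‖ ≤ Q.card * (μm * l1 p + μb * l1 q) := by
    rw [Finset.mul_sum]
    calc ∑ j ∈ Q, (1 + μb) * ‖q j‖ ≤ ∑ j ∈ Q, (μm * l1 p + μb * l1 q) :=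
          Finset.sum_le_sum step
      _ = Q.card * (μm * l1 p + μb * l1 q) := by
          rw [Finset.sum_const, nsmul_eq_mul]
  have hcon2 : (1 + μb) * ((1 - εQ) * l1 q) ≤ (1 + μb) * ∑ j ∈ Q, ‖q j‖ :=
    mul_le_mul_of_nonneg_left hconQ (by linarith)
  rcases le_total ((1 + μb) * (1 - εQ) - Q.card * μb) 0 with h | h
  · rw [max_eq_right h]
    have : (0:ℝ) ≤ Q.card * μm * l1 p := by positivity
    linarith
  · rw [max_eq_left h]
    nlinarith [hcon2, hsum]
end

section
/- Let t be a positive integer and M = t². Then the unitary DFT matrix F_M maps the comb signal comb_t to itself, i.e., F_M · comb_t = comb_t. Consequently, the pair p = q = comb_t satisfies F_M p = I_M q with ‖p‖₀ = ‖q‖₀ = t, so that ‖p‖₀ · ‖q‖₀ = M, achieving equality in the uncertainty relation μ_m² |supp(p)| |supp(q)| ≥ 1 for the pair (F_M, I_M), whose mutual coherence is μ_m = 1/√M. -/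
open scoped BigOperators ComplexConjugate
open Matrix

/-- The M×M unitary DFT matrix, 0-indexed. -/
noncomputable def dft (M : ℕ) : Matrix (Fin M) (Fin M) ℂ :=
  fun j k => ((Real.sqrt M : ℝ) : ℂ)⁻¹ *
    Complex.exp (-(2 * Real.pi * Complex.I * ((j : ℕ) : ℂ) * ((k : ℕ) : ℂ)) / (M : ℂ))

/-- Comb signal: 1 at indices divisible by t, 0 elsewhere. -/
def comb (M t : ℕ) : Fin M → ℂ := fun j => if t ∣ (j : ℕ) then 1 else 0

lemma zeta_eq_one_iff (n : ℕ) (hn : 0 < n) (j : ℕ) :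
    Complex.exp (-(2 * Real.pi * Complex.I * j) / n) = 1 ↔ n ∣ j := by
  have hn' : (n : ℂ) ≠ 0 := Nat.cast_ne_zero.mpr hn.ne'
  have hpi : (2 * (Real.pi:ℂ) * Complex.I) ≠ 0 := by
    simp [Real.pi_ne_zero, Complex.I_ne_zero]
  rw [Complex.exp_eq_one_iff]
  constructor
  · rintro ⟨k, hk⟩
    have this1 : -(2 * (Real.pi:ℂ) * Complex.I * j) = k * (2 * Real.pi * Complex.I) * n := by
      field_simp at hk; linear_combination (2 * (Real.pi:ℂ) * Complex.I) * hk
    have h2 : (2*(Real.pi:ℂ)*Complex.I) * (j:ℂ) = (2*(Real.pi:ℂ)*Complex.I) * (((-k : ℤ):ℂ) * n) := by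
      push_cast; linear_combination -this1
    have h3 : (j:ℂ) = ((-k : ℤ):ℂ) * (n:ℂ) := mul_left_cancel₀ hpi h2
    have h4 : (j:ℤ) = (-k) * (n:ℤ) := by exact_mod_cast h3
    have : (n:ℤ) ∣ (j:ℤ) := ⟨-k, by linarith [h4]⟩
    exact_mod_cast this
  · rintro ⟨c, rfl⟩
    refine ⟨-c, ?_⟩
    push_cast
    field_simp

lemma geom_roots (n : ℕ) (hn : 0 < n) (j : ℕ) :
    ∑ m ∈ Finset.range n, Complex.exp (-(2 * Real.pi * Complex.I * j) / n) ^ m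
      = if n ∣ j then (n : ℂ) else 0 := by
  by_cases h : n ∣ j
  · simp [(zeta_eq_one_iff n hn j).mpr h, h]
  · rw [if_neg h]
    have hζ : Complex.exp (-(2 * Real.pi * Complex.I * j) / n) ≠ 1 :=
      fun hc => h ((zeta_eq_one_iff n hn j).mp hc)
    rw [geom_sum_eq hζ]
    have hpow : Complex.exp (-(2 * Real.pi * Complex.I * j) / n) ^ n = 1 := by
      rw [← Complex.exp_nat_mul]
      have hn' : (n : ℂ) ≠ 0 := Nat.cast_ne_zero.mpr hn.ne'
      have : (n:ℂ) * (-(2 * Real.pi * Complex.I * j) / n) = (-(j:ℤ)) * (2 * Real.pi * Complex.I) := by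
        push_cast; field_simp
      rw [this]; exact_mod_cast Complex.exp_int_mul_two_pi_mul_I (-(j:ℤ))
    rw [hpow]; simp

lemma filter_mult (t : ℕ) (ht : 0 < t) :
    (Finset.range (t^2)).filter (fun k => t ∣ k) = (Finset.range t).image (fun m => t * m) := by
  ext k
  simp only [Finset.mem_filter, Finset.mem_image, Finset.mem_range]
  constructor
  · rintro ⟨hk, m, rfl⟩
    exact ⟨m, by nlinarith [pow_two t ▸ hk], rfl⟩
  · rintro ⟨m, hm, rfl⟩
    exact ⟨by rw [pow_two]; exact (Nat.mul_lt_mul_left ht).mpr hm, ⟨m, rfl⟩⟩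

lemma dft_comb (t : ℕ) (ht : 0 < t) (M : ℕ) (hM : M = t ^ 2) :
    (dft M).mulVec (comb M t) = comb M t := by
  subst hM
  have hMpos : 0 < t^2 := by positivity
  have hsq : Real.sqrt ((t:ℕ)^2 : ℕ) = t := by push_cast; exact Real.sqrt_sq (by positivity)
  have htC : (t : ℂ) ≠ 0 := Nat.cast_ne_zero.mpr ht.ne'
  funext j
  rw [mulVec, dotProduct]
  have step1 : ∑ k : Fin (t^2), dft (t^2) j k * comb (t^2) t k
      = ∑ k ∈ Finset.range (t^2), (if t ∣ k then
          ((Real.sqrt (t^2:ℕ) : ℝ) : ℂ)⁻¹ *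
            Complex.exp (-(2 * Real.pi * Complex.I * ((j:ℕ):ℂ) * (k:ℂ)) / ((t^2:ℕ):ℂ)) else 0) := by
    rw [← Fin.sum_univ_eq_sum_range]
    refine Finset.sum_congr rfl fun k _ => ?_
    simp only [dft, comb, mul_ite, mul_one, mul_zero]
  rw [step1, ← Finset.sum_filter, filter_mult t ht,
    Finset.sum_image (fun a _ b _ h => Nat.eq_of_mul_eq_mul_left ht h)]
  have step2 : ∀ m ∈ Finset.range t,
      ((Real.sqrt (t^2:ℕ) : ℝ) : ℂ)⁻¹ *
        Complex.exp (-(2 * Real.pi * Complex.I * ((j:ℕ):ℂ) * ((t*m : ℕ):ℂ)) / ((t^2:ℕ):ℂ))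
      = ((Real.sqrt (t^2:ℕ) : ℝ) : ℂ)⁻¹ *
        Complex.exp (-(2 * Real.pi * Complex.I * (j:ℕ)) / t) ^ m := by
    intro m _
    congr 1
    rw [← Complex.exp_nat_mul]
    congr 1
    push_cast
    field_simp
  rw [Finset.sum_congr rfl step2, ← Finset.mul_sum, geom_roots t ht j]
  rw [hsq]
  simp only [comb]
  by_cases h : t ∣ (j:ℕ) <;> simp [h, htC]

lemma l0_comb (t : ℕ) (ht : 0 < t) (M : ℕ) (hM : M = t ^ 2) :
    l0 (comb M t) = t := by
  subst hM
  have hset : {i : Fin (t^2) | comb (t^2) t i ≠ 0}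
      = ↑(Finset.univ.filter fun i : Fin (t^2) => t ∣ (i:ℕ)) := by
    ext i
    simp [comb]
  rw [l0, hset, Set.ncard_coe_finset]
  have hcard : (Finset.univ.filter fun i : Fin (t^2) => t ∣ (i:ℕ)).card
      = ((Finset.range (t^2)).filter fun k => t ∣ k).card := by
    refine Finset.card_bij (fun a _ => (a : ℕ)) ?_ ?_ ?_
    · intro a ha
      simp only [Finset.mem_filter, Finset.mem_range, Finset.mem_univ, true_and] at ha ⊢
      exact ⟨a.isLt, ha⟩
    · intro a _ b _ h
      exact Fin.val_injective h
    · intro b hb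
      simp only [Finset.mem_filter, Finset.mem_range] at hb
      exact ⟨⟨b, hb.1⟩, by simp [hb.2], rfl⟩
  rw [hcard, filter_mult t ht,
    Finset.card_image_of_injective _ (fun a b h => Nat.eq_of_mul_eq_mul_left ht h),
    Finset.card_range]

lemma mcoh_dft (M : ℕ) (hM : 0 < M) :
    mcoh (dft M) (1 : Matrix (Fin M) (Fin M) ℂ) = 1 / Real.sqrt M := by
  have : Nonempty (Fin M) := ⟨⟨0, hM⟩⟩
  have hval : ∀ k l : Fin M, ‖∑ i, conj (dft M i k) * (1 : Matrix (Fin M) (Fin M) ℂ) i l‖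
      = 1 / Real.sqrt M := by
    intro k l
    have hsum : ∑ i, conj (dft M i k) * (1 : Matrix (Fin M) (Fin M) ℂ) i l
        = conj (dft M l k) := by
      simp [Matrix.one_apply, mul_ite]
    rw [hsum, RCLike.norm_conj]
    have harg : -(2 * Real.pi * Complex.I * ((l:ℕ):ℂ) * ((k:ℕ):ℂ)) / (M:ℂ)
        = ((-(2 * Real.pi * (l:ℕ) * (k:ℕ)) / (M:ℝ) : ℝ) : ℂ) * Complex.I := by
      push_cast; ring
    rw [dft, harg, norm_mul, Complex.norm_exp_ofReal_mul_I]
    have : (0:ℝ) ≤ Real.sqrt M := Real.sqrt_nonneg _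
    simp [Complex.norm_real, abs_of_nonneg this, one_div]
  rw [mcoh]
  simp only [hval]
  rw [ciSup_const]
  exact ciSup_const

/-- The comb signal is a fixed point of the DFT when M = t², and achieves equality
in the uncertainty relation for the pair (F_M, I_M). -/
theorem comb_achieves_uncertainty_equality
    (t : ℕ) (ht : 0 < t) (M : ℕ) (hM : M = t ^ 2) :
    (dft M).mulVec (comb M t) = comb M t ∧
    l0 (comb M t) = t ∧
    l0 (comb M t) * l0 (comb M t) = M ∧
    mcoh (dft M) (1 : Matrix (Fin M) (Fin M) ℂ) = 1 / Real.sqrt M ∧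
    (1 / Real.sqrt M) ^ 2 * ((l0 (comb M t) : ℝ) * (l0 (comb M t) : ℝ)) = 1 := by
  have hMpos : 0 < M := by rw [hM]; positivity
  have hl0 := l0_comb t ht M hM
  refine ⟨dft_comb t ht M hM, hl0, by rw [hl0, hM]; ring, mcoh_dft M hMpos, ?_⟩
  rw [hl0]
  have hsq : Real.sqrt M = t := by
    rw [hM]; push_cast; exact Real.sqrt_sq (by positivity)
  have htR : (t : ℝ) ≠ 0 := Nat.cast_ne_zero.mpr ht.ne'
  rw [hsq]
  field_simp
end

section
/- Let A ∈ ℂ^{M×N_a} be a matrix with unit ℓ²-norm columns, coherence μ_a, and let μ_m = max_{k,ℓ} |[A]_{ℓ,k}| be the maximum magnitude of an entry of A (the mutual coherence between A and the identity matrix I_M). Let n_x and n_e be positive integers with μ_m² · n_x · n_e < [1 − μ_a(n_x−1)]_+. Then for every set X ⊆ {1,…,N_a} of n_x column indices and every set E ⊆ {1,…,M} of n_e row indices, the (M−n_e)×n_x submatrix of A obtained by deleting the rows in E and retaining the columns in X has linearly independent columns (full column rank). -/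
open scoped BigOperators ComplexConjugate
open Matrix

lemma norm_le_mu {M Na : ℕ} (A : Matrix (Fin M) (Fin Na) ℂ) (i : Fin M) (k : Fin Na) :
    ‖A i k‖ ≤ ⨆ l : Fin M, ⨆ k : Fin Na, ‖A l k‖ := by
  have h1 : ‖A i k‖ ≤ ⨆ k' : Fin Na, ‖A i k'‖ :=
    le_ciSup (f := fun k' : Fin Na => ‖A i k'‖) (Finite.bddAbove_range _) k
  exact h1.trans (le_ciSup (f := fun l : Fin M => ⨆ k' : Fin Na, ‖A l k'‖)
    (Finite.bddAbove_range _) i)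

lemma gram_le_coh {M Na : ℕ} (A : Matrix (Fin M) (Fin Na) ℂ) {k l : Fin Na} (h : k ≠ l) :
    ‖∑ i, conj (A i k) * A i l‖ ≤ coh A := by
  unfold coh
  have h1 : ‖∑ i, conj (A i k) * A i l‖
      = ⨆ _ : k ≠ l, ‖∑ i, conj (A i k) * A i l‖ :=
    (ciSup_pos (f := fun _ : k ≠ l => ‖∑ i, conj (A i k) * A i l‖) h).symm
  rw [h1]
  have h2 : (⨆ _ : k ≠ l, ‖∑ i, conj (A i k) * A i l‖)
      ≤ ⨆ l', ⨆ _ : k ≠ l', ‖∑ i, conj (A i k) * A i l'‖ :=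
    le_ciSup (f := fun l' => ⨆ _ : k ≠ l', ‖∑ i, conj (A i k) * A i l'‖)
      (Finite.bddAbove_range _) l
  exact h2.trans (le_ciSup (f := fun k' => ⨆ l', ⨆ _ : k' ≠ l', ‖∑ i, conj (A i k') * A i l'‖)
    (Finite.bddAbove_range _) k)

lemma conj_mul_self (z : ℂ) : conj z * z = ((‖z‖ ^ 2 : ℝ) : ℂ) := by
  rw [← Complex.normSq_eq_conj_mul_self, Complex.normSq_eq_norm_sq]

/-- Every (M − n_e) × n_x submatrix of A (rows in Eᶜ, columns in X) has full column rank. -/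
theorem row_deleted_submatrix_full_rank
    {M Na : ℕ} (A : Matrix (Fin M) (Fin Na) ℂ) (hA : unitCols A)
    (μa μm : ℝ) (hμa : μa = coh A)
    (hμm : μm = ⨆ l : Fin M, ⨆ k : Fin Na, ‖A l k‖)
    (nx ne : ℕ) (hnx : 0 < nx) (hne : 0 < ne)
    (hcond : μm ^ 2 * nx * ne < max (1 - μa * ((nx : ℝ) - 1)) 0) :
    ∀ X : Finset (Fin Na), X.card = nx →
    ∀ E : Finset (Fin M), E.card = ne →
      LinearIndependent ℂ
        (fun k : {k // k ∈ X} => fun i : {i : Fin M // i ∉ E} => A i.val k.val) := by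
  intro X hX E hE
  rw [Fintype.linearIndependent_iff]
  intro g hg
  have hmm0 : (0:ℝ) ≤ μm ^ 2 * nx * ne := by positivity
  have hcond' : μm ^ 2 * nx * ne < 1 - μa * ((nx : ℝ) - 1) := by
    rcases lt_max_iff.mp hcond with h | h
    · exact h
    · linarith
  have hcard : Fintype.card {k // k ∈ X} = nx := (Fintype.card_coe X).trans hX
  obtain ⟨y, hy⟩ : ∃ y : Fin M → ℂ,
      y = fun i => ∑ k : {k // k ∈ X}, g k * A i k.val := ⟨_, rfl⟩
  have hy0 : ∀ i : Fin M, i ∉ E → y i = 0 := by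
    intro i hi
    have h := congrFun hg ⟨i, hi⟩
    rw [hy]
    simpa [Finset.sum_apply, Pi.smul_apply, smul_eq_mul, Finset.univ_eq_attach] using h
  obtain ⟨G, hGdef⟩ : ∃ G : {k // k ∈ X} → {k // k ∈ X} → ℂ,
      G = fun k l => ∑ i : Fin M, conj (A i k.val) * A i l.val := ⟨_, rfl⟩
  obtain ⟨S, hS⟩ : ∃ S : ℝ, S = ∑ k : {k // k ∈ X}, ‖g k‖ ^ 2 := ⟨_, rfl⟩
  obtain ⟨Q, hQ⟩ : ∃ Q : ℝ, Q = ∑ k : {k // k ∈ X}, ‖g k‖ := ⟨_, rfl⟩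
  obtain ⟨L, hL⟩ : ∃ L : ℝ, L = ∑ i : Fin M, ‖y i‖ ^ 2 := ⟨_, rfl⟩
  have hQ0 : 0 ≤ Q := hQ ▸ Finset.sum_nonneg fun _ _ => norm_nonneg _
  have hS0 : 0 ≤ S := hS ▸ Finset.sum_nonneg fun _ _ => by positivity
  have hCS : Q ^ 2 ≤ (nx : ℝ) * S := by
    have h := sq_sum_le_card_mul_sum_sq (s := (Finset.univ : Finset {k // k ∈ X}))
      (f := fun k => ‖g k‖)
    rw [hQ, hS]
    rw [Finset.card_univ, hcard] at h
    exact_mod_cast h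
  -- Gram expansion
  have hGram : (∑ i : Fin M, conj (y i) * y i)
      = ∑ k : {k // k ∈ X}, ∑ l : {k // k ∈ X}, conj (g k) * g l * G k l := by
    calc (∑ i : Fin M, conj (y i) * y i)
        = ∑ i : Fin M, ∑ k : {k // k ∈ X}, ∑ l : {k // k ∈ X},
            conj (g k) * g l * (conj (A i k.val) * A i l.val) := by
          refine Finset.sum_congr rfl fun i _ => ?_
          rw [hy, map_sum, Finset.sum_mul_sum]
          refine Finset.sum_congr rfl fun k _ => Finset.sum_congr rfl fun l _ => ?_
          rw [RingHom.map_mul]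
          ring
      _ = ∑ k : {k // k ∈ X}, ∑ l : {k // k ∈ X}, ∑ i : Fin M,
            conj (g k) * g l * (conj (A i k.val) * A i l.val) := by
          rw [Finset.sum_comm]
          exact Finset.sum_congr rfl fun k _ => Finset.sum_comm
      _ = ∑ k : {k // k ∈ X}, ∑ l : {k // k ∈ X}, conj (g k) * g l * G k l := by
          rw [hGdef]
          exact Finset.sum_congr rfl fun k _ => Finset.sum_congr rfl fun l _ =>
            (Finset.mul_sum _ _ _).symm
  have hGdiag : ∀ k : {k // k ∈ X}, G k k = 1 := by
    intro k
    rw [hGdef]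
    have h1 : (∑ i : Fin M, conj (A i k.val) * A i k.val)
        = ((∑ i : Fin M, ‖A i k.val‖ ^ 2 : ℝ) : ℂ) := by
      push_cast
      refine Finset.sum_congr rfl fun i _ => ?_
      rw [conj_mul_self]
      norm_cast
    simp only [h1, hA k.val]
    norm_num
  obtain ⟨Roff, hRoff⟩ : ∃ R : ℂ, R = ∑ k : {k // k ∈ X},
      ∑ l ∈ Finset.univ.erase k, conj (g k) * g l * G k l := ⟨_, rfl⟩
  have hLdecomp : L = S + Roff.re := by
    have h1 : L = (∑ i : Fin M, conj (y i) * y i).re := by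
      rw [hL, Complex.re_sum]
      refine Finset.sum_congr rfl fun i _ => ?_
      rw [conj_mul_self]
      exact (Complex.ofReal_re _).symm
    rw [h1, hGram]
    have h2 : (∑ k : {k // k ∈ X}, ∑ l : {k // k ∈ X}, conj (g k) * g l * G k l)
        = (∑ k : {k // k ∈ X}, conj (g k) * g k * G k k) + Roff := by
      rw [hRoff, ← Finset.sum_add_distrib]
      exact Finset.sum_congr rfl fun k _ =>
        (Finset.add_sum_erase _ _ (Finset.mem_univ k)).symm
    rw [h2]
    have h3 : (∑ k : {k // k ∈ X}, conj (g k) * g k * G k k) = ((S : ℝ) : ℂ) := by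
      rw [hS]
      push_cast
      refine Finset.sum_congr rfl fun k _ => ?_
      rw [hGdiag k, mul_one, conj_mul_self]
      norm_cast
    rw [h3]
    simp
  -- bound ‖Roff‖
  have hRbound : ‖Roff‖ ≤ μa * (Q ^ 2 - S) := by
    have h1 : ‖Roff‖ ≤ ∑ k : {k // k ∈ X}, ∑ l ∈ Finset.univ.erase k,
        μa * (‖g k‖ * ‖g l‖) := by
      rw [hRoff]
      refine (norm_sum_le _ _).trans (Finset.sum_le_sum fun k _ => ?_)
      refine (norm_sum_le _ _).trans (Finset.sum_le_sum fun l hl => ?_)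
      have hkl : k.val ≠ l.val := fun h =>
        (Finset.ne_of_mem_erase hl) (Subtype.ext h.symm)
      have hGle : ‖G k l‖ ≤ μa := by rw [hGdef, hμa]; exact gram_le_coh A hkl
      calc ‖conj (g k) * g l * G k l‖ = ‖g k‖ * ‖g l‖ * ‖G k l‖ := by
            rw [norm_mul, norm_mul, RCLike.norm_conj]
        _ ≤ ‖g k‖ * ‖g l‖ * μa := by
            apply mul_le_mul_of_nonneg_left hGle; positivity
        _ = μa * (‖g k‖ * ‖g l‖) := by ring
    refine h1.trans_eq ?_
    have h2 : ∑ k : {k // k ∈ X}, ∑ l ∈ Finset.univ.erase k, ‖g k‖ * ‖g l‖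
        = Q ^ 2 - S := by
      have h3 : ∀ k : {k // k ∈ X},
          ∑ l ∈ Finset.univ.erase k, ‖g k‖ * ‖g l‖
          = (∑ l : {k // k ∈ X}, ‖g k‖ * ‖g l‖) - ‖g k‖ ^ 2 := by
        intro k
        rw [← Finset.add_sum_erase _ _ (Finset.mem_univ k), sq]
        ring
      rw [Finset.sum_congr rfl fun k _ => h3 k, Finset.sum_sub_distrib, ← hS]
      congr 1
      rw [hQ, sq, Finset.sum_mul_sum]
    rw [← h2, Finset.mul_sum]
    exact Finset.sum_congr rfl fun k _ => (Finset.mul_sum _ _ _).symm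
  have hQS : μa * (Q ^ 2 - S) ≤ μa * ((nx:ℝ) - 1) * S := by
    rcases eq_or_lt_of_le (Nat.one_le_iff_ne_zero.mpr hnx.ne') with h1 | h1
    · have hc1 : Fintype.card {k // k ∈ X} = 1 := by rw [hcard, ← h1]
      obtain ⟨k0, hk0⟩ := Fintype.card_eq_one_iff.mp hc1
      have hq : Q = ‖g k0‖ := by
        rw [hQ, Fintype.sum_eq_single k0 (fun k hk => absurd (hk0 k) hk)]
      have hs : S = ‖g k0‖ ^ 2 := by
        rw [hS, Fintype.sum_eq_single k0 (fun k hk => absurd (hk0 k) hk)]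
      rw [hq, hs, ← h1]
      push_cast
      ring_nf
      exact le_refl _
    · have h2 : 1 < X.card := by omega
      obtain ⟨a, ha, b, hb, hab⟩ := Finset.one_lt_card.mp h2
      have hμa0 : 0 ≤ μa := le_trans (norm_nonneg _) (hμa ▸ gram_le_coh A hab)
      have h4 : Q ^ 2 - S ≤ ((nx:ℝ) - 1) * S := by nlinarith
      calc μa * (Q ^ 2 - S) ≤ μa * (((nx:ℝ) - 1) * S) :=
            mul_le_mul_of_nonneg_left h4 hμa0
        _ = μa * ((nx:ℝ) - 1) * S := by ring
  have hlow : (1 - μa * ((nx:ℝ) - 1)) * S ≤ L := by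
    have h1 : |Roff.re| ≤ μa * ((nx:ℝ) - 1) * S := by
      refine le_trans ?_ (hRbound.trans hQS)
      simpa using Complex.abs_re_le_norm Roff
    have h2 := (abs_le.mp h1).1
    rw [hLdecomp]
    linarith
  obtain ⟨i0, hi0⟩ := Finset.card_pos.mp (hE ▸ hne)
  obtain ⟨k0, hk0⟩ := Finset.card_pos.mp (hX ▸ hnx)
  have hμm0 : 0 ≤ μm := le_trans (norm_nonneg (A i0 k0)) (hμm ▸ norm_le_mu A i0 k0)
  have hup : L ≤ μm ^ 2 * nx * ne * S := by
    have h1 : L = ∑ i ∈ E, ‖y i‖ ^ 2 := by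
      rw [hL]
      exact (Finset.sum_subset (Finset.subset_univ E) fun i _ hi => by
        rw [hy0 i hi]; simp).symm
    have h2 : ∀ i : Fin M, ‖y i‖ ^ 2 ≤ μm ^ 2 * ((nx:ℝ) * S) := by
      intro i
      have h3 : ‖y i‖ ≤ μm * Q := by
        rw [hy, hQ]
        refine (norm_sum_le _ _).trans ?_
        rw [Finset.mul_sum]
        refine Finset.sum_le_sum fun k _ => ?_
        rw [norm_mul]
        calc ‖g k‖ * ‖A i k.val‖ ≤ ‖g k‖ * μm :=
              mul_le_mul_of_nonneg_left (hμm ▸ norm_le_mu A i k.val) (norm_nonneg _)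
          _ = μm * ‖g k‖ := by ring
      have h4 : ‖y i‖ ^ 2 ≤ (μm * Q) ^ 2 := by
        have h5 := norm_nonneg (y i)
        nlinarith
      calc ‖y i‖ ^ 2 ≤ (μm * Q) ^ 2 := h4
        _ = μm ^ 2 * Q ^ 2 := by ring
        _ ≤ μm ^ 2 * ((nx:ℝ) * S) := by
            apply mul_le_mul_of_nonneg_left hCS; positivity
    calc L = ∑ i ∈ E, ‖y i‖ ^ 2 := h1
      _ ≤ ∑ _i ∈ E, μm ^ 2 * ((nx:ℝ) * S) := Finset.sum_le_sum fun i _ => h2 i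
      _ = (E.card : ℝ) * (μm ^ 2 * ((nx:ℝ) * S)) := by
          rw [Finset.sum_const, nsmul_eq_mul]
      _ = μm ^ 2 * nx * ne * S := by rw [hE]; ring
  intro k
  by_contra hk
  have hk1 : 0 < ‖g k‖ ^ 2 := by
    have h := norm_ne_zero_iff.mpr hk
    positivity
  have hk2 : ‖g k‖ ^ 2 ≤ S := by
    rw [hS]
    exact Finset.single_le_sum (f := fun j : {k // k ∈ X} => ‖g j‖ ^ 2) (fun j _ => by positivity) (Finset.mem_univ k)
  have hSpos : 0 < S := lt_of_lt_of_le hk1 hk2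
  nlinarith [hlow, hup, hcond', hSpos]
end
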